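/- If G is a connected bridgeless bipartite graph, then pc(G) ≤ 2, and there exists a 2-edge-coloring c of G such that G has the strong property under c. -/

import Mathlib

open SimpleGraph

variable {V : Type*}

/-- A walk is proper w.r.t. an edge-coloring if consecutive edges get distinct colors. -/
def IsProperWalk {α : Type*} {G : SimpleGraph V} (c : Sym2 V → α) {u v : V} (p : G.Walk u v) : Prop :=
  p.edges.Chain' (fun e f => c e ≠ c f)

/-- An edge-coloring is a proper-path coloring if every pair of vertices is joined by a proper path. -/
def IsProperConnColoring {α : Type*} (G : SimpleGraph V) (c : Sym2 V → α) : Prop :=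
  ∀ u v : V, ∃ p : G.Walk u v, p.IsPath ∧ IsProperWalk c p

/-- The proper connection number. -/
noncomputable def pc (G : SimpleGraph V) : ℕ :=
  sInf {k | ∃ c : Sym2 V → Fin k, IsProperConnColoring G c}

/-- Strong property of an edge-coloring. -/
def HasStrongProp {α : Type*} (G : SimpleGraph V) (c : Sym2 V → α) : Prop :=
  IsProperConnColoring G c ∧
  ∀ u v : V, u ≠ v → ∃ p₁ p₂ : G.Walk u v, p₁.IsPath ∧ p₂.IsPath ∧
    IsProperWalk c p₁ ∧ IsProperWalk c p₂ ∧
    p₁.edges.head?.map c ≠ p₂.edges.head?.map c ∧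
    p₁.edges.getLast?.map c ≠ p₂.edges.getLast?.map c

/-- k-connectedness. -/
def KConnected (k : ℕ) (G : SimpleGraph V) [Fintype V] : Prop :=
  k < Fintype.card V ∧ ∀ S : Finset V, S.card < k → (G.induce ((↑S : Set V)ᶜ)).Connected

/-- edge chromatic number -/
noncomputable def edgeChromatic (G : SimpleGraph V) : ℕ :=
  sInf {k | ∃ c : Sym2 V → Fin k, ∀ e ∈ G.edgeSet, ∀ f ∈ G.edgeSet, e ≠ f →
    (∃ x, x ∈ e ∧ x ∈ f) → c e ≠ c f}

/-- rainbow connection number -/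
noncomputable def rc (G : SimpleGraph V) : ℕ :=
  sInf {k | ∃ c : Sym2 V → Fin k, ∀ u v : V, ∃ p : G.Walk u v, p.IsPath ∧ (p.edges.map c).Nodup}


/-!
By Robbins' theorem a connected bridgeless graph has a strongly connected orientation: a strongly
connected oriented vertex set `S` can always be enlarged by an ear, found by following a non-bridge
edge leaving `S` and returning to `S` without using that edge. Colour each arc by the colour of its
head in a proper 2-colouring `col` of the bipartite graph. Consecutive arcs of a directed walk then
carry the colours of two adjacent vertices, so directed walks are proper, and a directed `u`–`v`
walk starts with colour `≠ col u` and ends with colour `col v`. For `u ≠ v`, a directed `u`–`v`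
path and the reverse of a directed `v`–`u` path therefore differ at both ends.
-/

open Relation

namespace SimpleGraph

variable {α : Type*} {G : SimpleGraph V} {r : V → V → Prop}

namespace Walk

def IsDirected (r : V → V → Prop) {u v : V} (p : G.Walk u v) : Prop :=
  ∀ d ∈ p.darts, r d.fst d.snd

@[simp]
lemma isDirected_nil {u : V} : (nil : G.Walk u u).IsDirected r := by
  simp [IsDirected]

@[simp]
lemma isDirected_cons {u v w : V} (h : G.Adj u v) (p : G.Walk v w) :
    (cons h p).IsDirected r ↔ r u v ∧ p.IsDirected r := by
  simp [IsDirected]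

lemma IsDirected.reflTransGen_of_mem_support {u v w : V} {p : G.Walk u w}
    (hp : p.IsDirected r) (hv : v ∈ p.support) : ReflTransGen r u v ∧ ReflTransGen r v w := by
  induction p generalizing v with
  | nil => simp_all [ReflTransGen.refl]
  | cons h p ih =>
    rw [isDirected_cons] at hp
    rcases (support_cons _ _ ▸ List.mem_cons).mp hv with rfl | hv
    · exact ⟨.refl, .head hp.1 (ih hp.2 p.start_mem_support).2⟩
    · exact (ih hp.2 hv).imp_left (.head hp.1)

section Colouring

variable {c : Sym2 V → α} {col : V → α} {u v : V} {p : G.Walk u v}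

lemma IsDirected.map_edges (hc : ∀ s t, r s t → c s(s, t) = col t) (hp : p.IsDirected r) :
    p.edges.map c = p.support.tail.map col := by
  induction p with
  | nil => rfl
  | cons h p ih =>
    rw [isDirected_cons] at hp
    rw [edges_cons, support_cons, List.tail_cons, ← cons_tail_support p, List.map_cons,
      List.map_cons, hc _ _ hp.1, ih hp.2]

lemma IsDirected.isProperWalk (col : G.Coloring α) (hc : ∀ s t, r s t → c s(s, t) = col t)
    (hp : p.IsDirected r) : IsProperWalk c p := by
  have hcol : (p.support.tail.map col).IsChain (· ≠ ·) :=
    (List.isChain_map _).mpr (p.isChain_adj_support.tail.imp fun _ _ h => col.valid h)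
  rwa [← hp.map_edges hc, List.isChain_map] at hcol

lemma IsDirected.head?_edges_map_ne (col : G.Coloring α)
    (hc : ∀ s t, r s t → c s(s, t) = col t) (hp : p.IsDirected r) :
    p.edges.head?.map c ≠ some (col u) := by
  rw [← List.head?_map, hp.map_edges hc]
  cases p with
  | nil => simp
  | cons h p =>
    rw [support_cons, List.tail_cons, ← cons_tail_support p, List.map_cons, List.head?_cons]
    exact fun h' => col.valid h.symm (Option.some_injective _ h')

lemma IsDirected.getLast?_edges_map (hc : ∀ s t, r s t → c s(s, t) = col t)
    (hp : p.IsDirected r) (huv : u ≠ v) : p.edges.getLast?.map c = some (col v) := by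
  rw [← List.getLast?_map, hp.map_edges hc]
  cases p with
  | nil => exact absurd rfl huv
  | cons h p =>
    rw [support_cons, List.tail_cons, List.getLast?_map,
      List.getLast?_eq_some_getLast p.support_ne_nil, getLast_support, Option.map_some]

end Colouring

lemma exists_walk_to_first_mem {S : Set V} {u v : V} (p : G.Walk u v) (hv : v ∈ S) :
    ∃ x ∈ S, ∃ q : G.Walk u x, q.edges ⊆ p.edges ∧ ∀ y ∈ q.support, y ∈ S → y = x := by
  induction p with
  | nil => exact ⟨_, hv, nil, by simp, by simp⟩
  | @cons u w v h p ih =>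
    by_cases hu : u ∈ S
    · exact ⟨u, hu, nil, by simp, by simp⟩
    obtain ⟨x, hx, q, hqp, hqS⟩ := ih hv
    refine ⟨x, hx, cons h q, ?_, ?_⟩
    · rw [edges_cons, edges_cons]
      exact List.cons_subset_cons _ hqp
    · rintro y hy hyS
      rcases (support_cons _ _ ▸ List.mem_cons).mp hy with rfl | hy
      · exact absurd hyS hu
      · exact hqS y hy hyS

structure IsEar (S : Set V) {a x : V} (W : G.Walk a x) : Prop where
  start_mem : a ∈ S
  end_mem : x ∈ S
  isTrail : W.IsTrail
  exists_not_mem : ∃ v ∈ W.support, v ∉ S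
  not_mem_of_mem_darts : ∀ d ∈ W.darts, d.fst ∉ S ∨ d.snd ∉ S

end Walk

lemma exists_isPath_isDirected (hr : ∀ a b, r a b → G.Adj a b) {u v : V}
    (h : ReflTransGen r u v) : ∃ p : G.Walk u v, p.IsPath ∧ p.IsDirected r := by
  classical
  obtain ⟨p, hp⟩ : ∃ p : G.Walk u v, p.IsDirected r := by
    induction h using ReflTransGen.head_induction_on with
    | refl => exact ⟨.nil, Walk.isDirected_nil⟩
    | head hab _ ih =>
      obtain ⟨p, hp⟩ := ih
      exact ⟨.cons (hr _ _ hab) p, (Walk.isDirected_cons _ _).mpr ⟨hab, hp⟩⟩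
  exact ⟨p.bypass, p.bypass_isPath, fun d hd => hp d (p.darts_bypass_subset_darts hd)⟩

lemma exists_isEar (hconn : G.Connected) (hbridgeless : ∀ e ∈ G.edgeSet, ¬ G.IsBridge e)
    {S : Set V} {s t : V} (hs : s ∈ S) (ht : t ∉ S) : ∃ a x, ∃ W : G.Walk a x, W.IsEar S := by
  classical
  obtain ⟨⟨⟨a, b⟩, hab⟩, -, ha, hb⟩ := (hconn.preconnected s t).some.exists_boundary_dart S hs ht
  dsimp only at ha hb hab
  obtain ⟨p, hp⟩ : ∃ p : G.Walk a b, s(a, b) ∉ p.edges := by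
    simpa [isBridge_iff_forall_walk_mem_edges] using hbridgeless s(a, b) hab
  obtain ⟨x, hx, q, hqp, hqS⟩ := p.reverse.exists_walk_to_first_mem ha
  have hq : s(a, b) ∉ q.bypass.edges := fun h =>
    hp (by simpa using hqp (q.edges_bypass_subset_edges h))
  refine ⟨a, x, .cons hab q.bypass, ha, hx, ?_, ⟨b, by simp, hb⟩, ?_⟩
  · exact (Walk.isTrail_cons _ _).mpr ⟨q.bypass_isPath.isTrail, hq⟩
  · rw [Walk.darts_cons, List.forall_mem_cons]
    refine ⟨.inr hb, fun d hd => ?_⟩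
    have hS : ∀ y ∈ q.bypass.support, y ∈ S → y = x :=
      fun y hy => hqS y (q.support_bypass_subset_support hy)
    by_contra! h
    exact d.adj.ne ((hS _ (q.bypass.dart_fst_mem_support_of_mem_darts hd) h.1).trans
      (hS _ (q.bypass.dart_snd_mem_support_of_mem_darts hd) h.2).symm)

structure IsStrongOrientationOn (G : SimpleGraph V) (r : V → V → Prop) (S : Set V) : Prop where
  adj : ∀ ⦃a b⦄, r a b → G.Adj a b
  asymm : ∀ ⦃a b⦄, r a b → ¬ r b a
  /-- Arcs stay inside `S`, so the arcs of an ear, which has no edge inside `S`, never reverse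
  one of them. -/
  mem : ∀ ⦃a b⦄, r a b → a ∈ S ∧ b ∈ S
  reach : ∀ u ∈ S, ∀ v ∈ S, ReflTransGen r u v

lemma IsStrongOrientationOn.union_ear {S : Set V} (h : G.IsStrongOrientationOn r S) {a x : V}
    {W : G.Walk a x} (hW : W.IsEar S) :
    G.IsStrongOrientationOn (fun s t => r s t ∨ ∃ d ∈ W.darts, d.fst = s ∧ d.snd = t)
      (S ∪ {v | v ∈ W.support}) := by
  set r' : V → V → Prop := fun s t => r s t ∨ ∃ d ∈ W.darts, d.fst = s ∧ d.snd = t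
  have hW' : W.IsDirected r' := fun d hd => .inr ⟨d, hd, rfl, rfl⟩
  have lift : ∀ {u v}, ReflTransGen r u v → ReflTransGen r' u v :=
    ReflTransGen.mono (fun _ _ => .inl) _ _
  have to_end : ∀ u ∈ S ∪ {v | v ∈ W.support}, ReflTransGen r' u x := by
    rintro u (hu | hu)
    · exact lift (h.reach u hu x hW.end_mem)
    · exact (hW'.reflTransGen_of_mem_support hu).2
  have from_start : ∀ v ∈ S ∪ {v | v ∈ W.support}, ReflTransGen r' a v := by
    rintro v (hv | hv)
    · exact lift (h.reach a hW.start_mem v hv)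
    · exact (hW'.reflTransGen_of_mem_support hv).1
  refine ⟨?_, ?_, ?_, fun u hu v hv =>
    ((to_end u hu).trans (lift (h.reach x hW.end_mem a hW.start_mem))).trans (from_start v hv)⟩
  · rintro s t (hst | ⟨d, -, rfl, rfl⟩)
    · exact h.adj hst
    · exact d.adj
  · rintro s t (hst | ⟨d, hd, rfl, rfl⟩) (hts | ⟨d', hd', hfst, hsnd⟩)
    · exact h.asymm hst hts
    · exact (hW.not_mem_of_mem_darts d' hd').elim (· (hfst ▸ (h.mem hst).2))
        (· (hsnd ▸ (h.mem hst).1))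
    · exact (hW.not_mem_of_mem_darts d hd).elim (· (h.mem hts).2) (· (h.mem hts).1)
    · have hdd' : d = d' := List.inj_on_of_nodup_map hW.isTrail.edges_nodup hd hd' (by
        rw [Dart.edge, Dart.edge, hfst, hsnd, Sym2.eq_swap])
      subst hdd'
      exact d.adj.ne hsnd.symm
  · rintro s t (hst | ⟨d, hd, rfl, rfl⟩)
    · exact (h.mem hst).imp .inl .inl
    · exact ⟨.inr (W.dart_fst_mem_support_of_mem_darts hd),
        .inr (W.dart_snd_mem_support_of_mem_darts hd)⟩

theorem exists_isStrongOrientationOn_univ [Finite V] (hconn : G.Connected)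
    (hbridgeless : ∀ e ∈ G.edgeSet, ¬ G.IsBridge e) :
    ∃ r, G.IsStrongOrientationOn r Set.univ := by
  obtain ⟨u₀⟩ := hconn.nonempty
  obtain ⟨S, ⟨hu₀, r, hr⟩, hmax⟩ := Set.Finite.exists_maximal
    (s := {S : Set V | u₀ ∈ S ∧ ∃ r, G.IsStrongOrientationOn r S}) (Set.toFinite _)
    ⟨{u₀}, rfl, fun _ _ => False, ⟨nofun, nofun, nofun, by simp [ReflTransGen.refl]⟩⟩
  refine ⟨r, Set.eq_univ_of_forall (fun t => by_contra fun ht => ?_) ▸ hr⟩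
  obtain ⟨a, x, W, hW⟩ := exists_isEar hconn hbridgeless hu₀ ht
  obtain ⟨v, hvW, hvS⟩ := hW.exists_not_mem
  exact hvS (hmax ⟨.inl hu₀, _, hr.union_ear hW⟩ Set.subset_union_left (.inr hvW))

open Classical in
noncomputable def headColoring [Inhabited α] (r : V → V → Prop)
    (hr : ∀ ⦃a b⦄, r a b → ¬ r b a) (col : V → α) : Sym2 V → α :=
  Sym2.lift ⟨fun s t => if r s t then col t else if r t s then col s else default, fun s t => by
    by_cases hst : r s t
    · simp [hst, hr hst]
    · by_cases hts : r t s <;> simp [hst, hts]⟩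

lemma headColoring_mk [Inhabited α] (hr : ∀ ⦃a b⦄, r a b → ¬ r b a) (col : V → α) {s t : V}
    (h : r s t) : headColoring r hr col s(s, t) = col t := by
  simp [headColoring, h]

end SimpleGraph

lemma IsProperWalk.reverse {α : Type*} {G : SimpleGraph V} {c : Sym2 V → α} {u v : V}
    {p : G.Walk u v} (hp : IsProperWalk c p) : IsProperWalk c p.reverse := by
  rw [IsProperWalk, Walk.edges_reverse]
  exact List.isChain_reverse.mpr (hp.imp fun _ _ h => h.symm)

theorem stmt_10 [Fintype V] (G : SimpleGraph V) (hconn : G.Connected)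
    (hbridgeless : ∀ e ∈ G.edgeSet, ¬ G.IsBridge e) (hbip : G.Colorable 2) :
    pc G ≤ 2 ∧ ∃ c : Sym2 V → Fin 2, HasStrongProp G c := by
  obtain ⟨r, hr⟩ := exists_isStrongOrientationOn_univ hconn hbridgeless
  obtain ⟨col⟩ := hbip
  set c := headColoring r hr.asymm col
  have hc : ∀ s t, r s t → c s(s, t) = col t := fun _ _ => headColoring_mk hr.asymm col
  have hpath : ∀ u v, ∃ p : G.Walk u v, p.IsPath ∧ p.IsDirected r := fun u v =>
    exists_isPath_isDirected hr.adj (hr.reach u trivial v trivial)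
  have hproper : IsProperConnColoring G c := fun u v =>
    let ⟨p, hp, hpr⟩ := hpath u v
    ⟨p, hp, hpr.isProperWalk col hc⟩
  refine ⟨Nat.sInf_le ⟨c, hproper⟩, c, hproper, fun u v huv => ?_⟩
  obtain ⟨p, hp, hpr⟩ := hpath u v
  obtain ⟨q, hq, hqr⟩ := hpath v u
  refine ⟨p, q.reverse, hp, hq.reverse, hpr.isProperWalk col hc,
    (hqr.isProperWalk col hc).reverse, ?_, ?_⟩
  · rw [Walk.edges_reverse, List.head?_reverse, hqr.getLast?_edges_map hc huv.symm]
    exact hpr.head?_edges_map_ne col hc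
  · rw [Walk.edges_reverse, List.getLast?_reverse, hpr.getLast?_edges_map hc huv]
    exact (hqr.head?_edges_map_ne col hc).symm
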